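/- Let q > 0 and t ∈ ℤ with t ≡ 1 (mod 3). Then the range of the function k ↦ 3 - √(g(k) + q²) over k ∈ ℝ, where g(k) = 3 + 2cos k + 2cos(tk) + 2cos((t+1)k), equals the interval [3 - √(9+q²), 3 - q]. -/

import Mathlib

/-!
The function `g` is `|1 + e^{ik} + e^{i(t+1)k}|²`, so `0 ≤ g ≤ 9`, with `g 0 = 9`; when
`t ≡ 1 (mod 3)` the three unit vectors at `k = 2π/3` are the cube roots of unity, so
`g (2π/3) = 0`. Since `k ↦ 3 - √(g k + q²)` is continuous and antitone in `g`, its range is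
the whole interval between its values at these two points.
-/

open Real Set

theorem range_eq_Icc_of_continuous {X α : Type*} [TopologicalSpace X] [PreconnectedSpace X]
    [LinearOrder α] [TopologicalSpace α] [OrderClosedTopology α] {f : X → α}
    (hf : Continuous f) {a b : α} (hmem : ∀ x, f x ∈ Icc a b) (ha : a ∈ range f)
    (hb : b ∈ range f) : range f = Icc a b :=
  (range_subset_iff.2 hmem).antisymm ((isPreconnected_range hf).Icc_subset ha hb)

theorem three_add_two_cos_eq_sq_add_sq (x y : ℝ) :
    3 + 2 * cos x + 2 * cos y + 2 * cos (x + y) =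
      (1 + cos x + cos (x + y)) ^ 2 + (sin x + sin (x + y)) ^ 2 := by
  have hy : cos y = cos (x + y - x) := by ring_nf
  rw [hy, cos_sub]
  linear_combination -sin_sq_add_cos_sq x - sin_sq_add_cos_sq (x + y)

theorem cos_two_pi_div_three : cos (2 * π / 3) = -(1 / 2) := by
  rw [show 2 * π / 3 = π - π / 3 by ring, cos_pi_sub, cos_pi_div_three]

theorem three_add_two_cos_at_two_pi_div_three {t : ℤ} (ht : (3 : ℤ) ∣ t - 1) :
    3 + 2 * cos (2 * π / 3) + 2 * cos (t * (2 * π / 3)) +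
      2 * cos ((t + 1) * (2 * π / 3)) = 0 := by
  obtain ⟨m, hm⟩ := ht
  have htm : (t : ℝ) = 3 * m + 1 := by exact_mod_cast (by omega : t = 3 * m + 1)
  have h₁ : (t : ℝ) * (2 * π / 3) = 2 * π / 3 + m * (2 * π) := by rw [htm]; ring
  have h₂ : ((t : ℝ) + 1) * (2 * π / 3) = -(2 * π / 3) + ((m + 1 : ℤ) : ℝ) * (2 * π) := by
    rw [htm]; push_cast; ring
  rw [h₁, h₂, cos_add_int_mul_two_pi, cos_add_int_mul_two_pi, cos_neg, cos_two_pi_div_three]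
  norm_num

/-- For `q > 0` and `t ≡ 1 (mod 3)`, the range of `k ↦ 3 - √(g(k) + q²)`, where
`g(k) = 3 + 2cos k + 2cos(tk) + 2cos((t+1)k)`, equals `[3 - √(9+q²), 3 - q]`. -/
theorem first_band_perturbed_1d (q : ℝ) (hq : 0 < q) (t : ℤ)
    (ht : (3 : ℤ) ∣ (t - 1))
    (g : ℝ → ℝ)
    (hg : ∀ k, g k = 3 + 2 * Real.cos k + 2 * Real.cos ((t : ℝ) * k) +
      2 * Real.cos (((t : ℝ) + 1) * k)) :
    Set.range (fun k : ℝ => 3 - Real.sqrt (g k + q ^ 2)) =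
      Set.Icc (3 - Real.sqrt (9 + q ^ 2)) (3 - q) := by
  have hg_nonneg : ∀ k, 0 ≤ g k := fun k => by
    rw [hg, show ((t : ℝ) + 1) * k = k + t * k by ring, three_add_two_cos_eq_sq_add_sq]
    positivity
  have hg_le : ∀ k, g k ≤ 9 := fun k => by
    rw [hg]; linarith [cos_le_one k, cos_le_one (t * k), cos_le_one ((t + 1) * k)]
  have hg_zero : g 0 = 9 := by rw [hg]; norm_num
  have hg_two_pi_div_three : g (2 * π / 3) = 0 := by
    rw [hg]; exact three_add_two_cos_at_two_pi_div_three ht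
  refine range_eq_Icc_of_continuous (by rw [funext hg]; fun_prop) (fun k => ⟨?_, ?_⟩)
    ⟨0, by simp [hg_zero]⟩ ⟨2 * π / 3, by simp [hg_two_pi_div_three, sqrt_sq hq.le]⟩
  · have := sqrt_le_sqrt (by linarith [hg_le k] : g k + q ^ 2 ≤ 9 + q ^ 2)
    linarith
  · have := sqrt_le_sqrt (by linarith [hg_nonneg k] : q ^ 2 ≤ g k + q ^ 2)
    rw [sqrt_sq hq.le] at this
    linarith
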